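/- arXiv:2503.16358 — 3 statements merged into one kernel-verified Lean document; each statement's English description precedes it below -/
import Mathlib

section
/- Let $1 \le r < s$ and let $X_1, X_2$ be random elements of a normed space with laws having finite $s$-th moments of the norm. Set $\theta = \frac{1/r - 1/s}{1 - 1/s}$. Then $W_r(X_1,X_2) \le W_1(X_1,X_2)^{\theta}\,(W_s(X_1,0) + W_s(X_2,0))^{1-\theta}$, where $W_p$ denotes the Wasserstein-$p$ distance with respect to the norm distance and $0$ is the point mass at the origin. -/
/-!
Fix a coupling `σ` of the two laws. All transport costs are then `L^p(σ)` norms of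
`f p = p.1 - p.2`, and the `L^p` interpolation inequality `‖f‖_r ≤ ‖f‖_1^θ ‖f‖_s^(1-θ)`
(Hölder applied to `|f|^r = |f|^a · |f|^(s b)` with `a + b = 1`) bounds the `r`-cost. Minkowski's
inequality bounds `‖f‖_s` by the `s`-th moments of the marginals, and these are `W_s(X_i, 0)`
because against a point mass every coupling has the same cost. Finally the infimum over couplings
commutes with `x ↦ x ^ θ` and with multiplication by the finite constant.
-/

open MeasureTheory
open scoped ENNReal

/-- The Wasserstein-`r` (extended) distance between two measures on a metric space,
defined as an infimum over couplings. -/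
noncomputable def wassersteinDist {S : Type*} [MeasurableSpace S] [PseudoMetricSpace S]
    (r : ℝ) (μ ν : Measure S) : ℝ≥0∞ :=
  ⨅ (σ : Measure (S × S)) (_ : σ.map Prod.fst = μ ∧ σ.map Prod.snd = ν),
    (∫⁻ p, ENNReal.ofReal (dist p.1 p.2 ^ r) ∂σ) ^ (1 / r)

section Interpolation

variable {α : Type*} [MeasurableSpace α] {μ : Measure α} {p r s : ℝ}

theorem lintegral_rpow_le_lintegral_rpow_mul_lintegral_rpow_of_measurable {f : α → ℝ≥0∞}
    (hf : Measurable f) (hp : 0 ≤ p) (hpr : p ≤ r) (hrs : r ≤ s) (hps : p < s) :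
    ∫⁻ a, f a ^ r ∂μ ≤
      (∫⁻ a, f a ^ p ∂μ) ^ ((s - r) / (s - p)) *
        (∫⁻ a, f a ^ s ∂μ) ^ ((r - p) / (s - p)) := by
  have hsp : 0 < s - p := sub_pos.2 hps
  have hα : 0 ≤ (s - r) / (s - p) := div_nonneg (sub_nonneg.2 hrs) hsp.le
  have hβ : 0 ≤ (r - p) / (s - p) := div_nonneg (sub_nonneg.2 hpr) hsp.le
  have hsplit (a : α) :
      f a ^ r = (f a ^ p) ^ ((s - r) / (s - p)) * (f a ^ s) ^ ((r - p) / (s - p)) := by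
    rw [← ENNReal.rpow_mul, ← ENNReal.rpow_mul,
      ← ENNReal.rpow_add_of_nonneg _ _ (mul_nonneg hp hα) (mul_nonneg (by linarith) hβ)]
    congr 1; field_simp; ring
  calc ∫⁻ a, f a ^ r ∂μ
      = ∫⁻ a, (f a ^ p) ^ ((s - r) / (s - p)) * (f a ^ s) ^ ((r - p) / (s - p)) ∂μ :=
        lintegral_congr hsplit
    _ ≤ _ := ENNReal.lintegral_mul_norm_pow_le (hf.pow_const p).aemeasurable
        (hf.pow_const s).aemeasurable hα hβ (by field_simp; ring)

/-- No measurability assumption on `f`: it is applied to `fun p : E × E => ‖p.1 - p.2‖ₑ`,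
which need not be measurable for the product σ-algebra when `E` is not separable. -/
theorem lintegral_rpow_le_lintegral_rpow_mul_lintegral_rpow (f : α → ℝ≥0∞)
    (hp : 0 < p) (hpr : p ≤ r) (hrs : r ≤ s) (hps : p < s) :
    ∫⁻ a, f a ^ r ∂μ ≤
      (∫⁻ a, f a ^ p ∂μ) ^ ((s - r) / (s - p)) *
        (∫⁻ a, f a ^ s ∂μ) ^ ((r - p) / (s - p)) := by
  have hr : 0 < r := hp.trans_le hpr
  have hs : 0 ≤ s := by linarith
  have hsp : 0 < s - p := sub_pos.2 hps
  have hα : 0 ≤ (s - r) / (s - p) := div_nonneg (sub_nonneg.2 hrs) hsp.le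
  have hβ : 0 ≤ (r - p) / (s - p) := div_nonneg (sub_nonneg.2 hpr) hsp.le
  obtain ⟨g, hg, hg_le, hg_eq⟩ := exists_measurable_le_lintegral_eq μ (fun a => f a ^ r)
  have hroot_le (a : α) : g a ^ (1 / r) ≤ f a := by
    simpa only [← ENNReal.rpow_mul, mul_one_div_cancel hr.ne', ENNReal.rpow_one] using
      ENNReal.rpow_le_rpow (hg_le a) (one_div_nonneg.2 hr.le)
  have hroot_pow (a : α) : (g a ^ (1 / r)) ^ r = g a := by
    rw [← ENNReal.rpow_mul, one_div_mul_cancel hr.ne', ENNReal.rpow_one]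
  calc ∫⁻ a, f a ^ r ∂μ = ∫⁻ a, (g a ^ (1 / r)) ^ r ∂μ := by
        simp only [hroot_pow, hg_eq]
    _ ≤ (∫⁻ a, (g a ^ (1 / r)) ^ p ∂μ) ^ ((s - r) / (s - p)) *
          (∫⁻ a, (g a ^ (1 / r)) ^ s ∂μ) ^ ((r - p) / (s - p)) :=
        lintegral_rpow_le_lintegral_rpow_mul_lintegral_rpow_of_measurable
          (hg.pow_const _) hp.le hpr hrs hps
    _ ≤ _ := by gcongr with a a <;> exact hroot_le a

theorem eLpNorm'_le_eLpNorm'_rpow_mul_eLpNorm'_rpow {ε : Type*} [ENorm ε] (f : α → ε)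
    (hp : 0 < p) (hpr : p ≤ r) (hrs : r < s) :
    eLpNorm' f r μ ≤ eLpNorm' f p μ ^ ((1 / r - 1 / s) / (1 / p - 1 / s)) *
      eLpNorm' f s μ ^ (1 - (1 / r - 1 / s) / (1 / p - 1 / s)) := by
  have hr : 0 < r := hp.trans_le hpr
  have hps : p < s := hpr.trans_lt hrs
  have hs : 0 < s := hp.trans hps
  have hsp : s - p ≠ 0 := (sub_pos.2 hps).ne'
  have hθ : 1 / p - 1 / s ≠ 0 := (sub_pos.2 (one_div_lt_one_div_of_lt hp hps)).ne'
  have hαθ :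
      (s - r) / (s - p) * (1 / r) = 1 / p * ((1 / r - 1 / s) / (1 / p - 1 / s)) := by
    field_simp
  have hβθ :
      (r - p) / (s - p) * (1 / r) = 1 / s * (1 - (1 / r - 1 / s) / (1 / p - 1 / s)) := by
    field_simp; ring
  simp only [eLpNorm'_eq_lintegral_enorm]
  calc (∫⁻ a, ‖f a‖ₑ ^ r ∂μ) ^ (1 / r)
      ≤ ((∫⁻ a, ‖f a‖ₑ ^ p ∂μ) ^ ((s - r) / (s - p)) *
          (∫⁻ a, ‖f a‖ₑ ^ s ∂μ) ^ ((r - p) / (s - p))) ^ (1 / r) := by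
        gcongr
        exact lintegral_rpow_le_lintegral_rpow_mul_lintegral_rpow _ hp hpr hrs.le hps
    _ = _ := by
        rw [ENNReal.mul_rpow_of_nonneg _ _ (one_div_nonneg.2 hr.le), ← ENNReal.rpow_mul,
          ← ENNReal.rpow_mul, hαθ, hβθ, ENNReal.rpow_mul, ENNReal.rpow_mul]

end Interpolation

theorem one_div_sub_one_div_div_mem_Ioc {r s : ℝ} (hr : 1 ≤ r) (hrs : r < s) :
    (1 / r - 1 / s) / (1 - 1 / s) ∈ Set.Ioc 0 1 := by
  have hs : 1 < s := hr.trans_lt hrs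
  have hden : 0 < 1 - 1 / s := sub_pos.2 ((div_lt_one (by linarith)).2 hs)
  refine ⟨div_pos (sub_pos.2 (one_div_lt_one_div_of_lt (by linarith) hrs)) hden, ?_⟩
  exact (div_le_one hden).2 (by gcongr; exact (div_le_one (by linarith)).2 hr)

theorem exists_map_fst_eq_map_and_map_snd_eq_map {Ω α β : Type*} [MeasurableSpace Ω]
    [MeasurableSpace α] [MeasurableSpace β] (P : Measure Ω) {X₁ : Ω → α} {X₂ : Ω → β}
    (hX₁ : Measurable X₁) (hX₂ : Measurable X₂) :
    ∃ σ : Measure (α × β), σ.map Prod.fst = P.map X₁ ∧ σ.map Prod.snd = P.map X₂ :=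
  ⟨P.map fun ω => (X₁ ω, X₂ ω), Measure.map_map measurable_fst (hX₁.prodMk hX₂),
    Measure.map_map measurable_snd (hX₁.prodMk hX₂)⟩

section Wasserstein

variable {E : Type*} [NormedAddCommGroup E] [MeasurableSpace E]

theorem wassersteinDist_eq_iInf_eLpNorm' {r : ℝ} (hr : 0 ≤ r) (μ ν : Measure E) :
    wassersteinDist r μ ν =
      ⨅ (σ : Measure (E × E)) (_ : σ.map Prod.fst = μ ∧ σ.map Prod.snd = ν),
        eLpNorm' (fun p : E × E => p.1 - p.2) r σ := by
  simp only [wassersteinDist, eLpNorm'_eq_lintegral_enorm, dist_eq_norm,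
    ← ENNReal.ofReal_rpow_of_nonneg (norm_nonneg _) hr, ofReal_norm]

theorem wassersteinDist_le_rpow_mul_of_forall {μ ν : Measure E} {q r θ : ℝ} {c : ℝ≥0∞}
    (hq : 0 ≤ q) (hr : 0 ≤ r) (hθ : 0 < θ) (hc : c ≠ ⊤)
    (hne : ∃ σ : Measure (E × E), σ.map Prod.fst = μ ∧ σ.map Prod.snd = ν)
    (h : ∀ σ : Measure (E × E), σ.map Prod.fst = μ ∧ σ.map Prod.snd = ν →
      eLpNorm' (fun p : E × E => p.1 - p.2) r σ ≤
        eLpNorm' (fun p : E × E => p.1 - p.2) q σ ^ θ * c) :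
    wassersteinDist r μ ν ≤ wassersteinDist q μ ν ^ θ * c := by
  have : Nonempty {σ : Measure (E × E) // σ.map Prod.fst = μ ∧ σ.map Prod.snd = ν} :=
    nonempty_subtype.2 hne
  simp only [wassersteinDist_eq_iInf_eLpNorm' hr, wassersteinDist_eq_iInf_eLpNorm' hq,
    iInf_subtype']
  refine (iInf_mono (ι := {σ : Measure (E × E) // σ.map Prod.fst = μ ∧ σ.map Prod.snd = ν})
    fun σ => h σ.1 σ.2).trans_eq ?_
  rw [← ENNReal.iInf_mul fun hc' => absurd hc' hc]
  congr 1
  exact ((ENNReal.orderIsoRpow θ hθ).map_iInf _).symm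

variable [BorelSpace E]

theorem eLpNorm'_id_map {β : Type*} [MeasurableSpace β] {g : β → E} (hg : Measurable g)
    (q : ℝ) (ν : Measure β) : eLpNorm' id q (ν.map g) = eLpNorm' g q ν := by
  simp only [eLpNorm'_eq_lintegral_enorm, id, lintegral_map (measurable_enorm.pow_const q) hg]

theorem eLpNorm'_sub_le_eLpNorm'_id_add {σ : Measure (E × E)} {μ ν : Measure E} {s : ℝ}
    (hs : 1 ≤ s) (h₁ : σ.map Prod.fst = μ) (h₂ : σ.map Prod.snd = ν) :
    eLpNorm' (fun p : E × E => p.1 - p.2) s σ ≤ eLpNorm' id s μ + eLpNorm' id s ν := by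
  have hfst : Measurable fun p : E × E => ‖p.1‖ₑ := measurable_enorm.comp measurable_fst
  have hsnd : Measurable fun p : E × E => ‖p.2‖ₑ := measurable_enorm.comp measurable_snd
  calc eLpNorm' (fun p : E × E => p.1 - p.2) s σ
      ≤ eLpNorm' ((fun p : E × E => ‖p.1‖ₑ) + fun p => ‖p.2‖ₑ) s σ :=
        eLpNorm'_mono_enorm_ae (by linarith) (.of_forall fun p => enorm_sub_le)
    _ ≤ eLpNorm' (fun p : E × E => ‖p.1‖ₑ) s σ +
          eLpNorm' (fun p : E × E => ‖p.2‖ₑ) s σ :=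
        eLpNorm'_add_le hfst.aestronglyMeasurable hsnd.aestronglyMeasurable hs
    _ = eLpNorm' id s μ + eLpNorm' id s ν := by
        rw [eLpNorm'_enorm, eLpNorm'_enorm, ← h₁, ← h₂, eLpNorm'_id_map measurable_fst,
          eLpNorm'_id_map measurable_snd]

theorem wassersteinDist_dirac_zero (μ : Measure E) [IsProbabilityMeasure μ] {s : ℝ}
    (hs : 0 ≤ s) : wassersteinDist s μ (Measure.dirac 0) = eLpNorm' id s μ := by
  have hcost {σ : Measure (E × E)}
      (h : σ.map Prod.fst = μ ∧ σ.map Prod.snd = Measure.dirac 0) :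
      eLpNorm' (fun p : E × E => p.1 - p.2) s σ = eLpNorm' id s μ := by
    have hsnd : ∀ᵐ p ∂σ, p.2 = (0 : E) := by
      refine ae_of_ae_map (p := fun y : E => y = 0) measurable_snd.aemeasurable ?_
      simp only [h.2, ae_dirac_eq, Filter.eventually_pure]
    rw [eLpNorm'_congr_ae (g := Prod.fst) (hsnd.mono fun p hp => by simp [hp]), ← h.1,
      eLpNorm'_id_map measurable_fst]
  have hprod : (μ.prod (Measure.dirac (0 : E))).map Prod.fst = μ ∧
      (μ.prod (Measure.dirac (0 : E))).map Prod.snd = Measure.dirac 0 := by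
    simp [Measure.map_fst_prod, Measure.map_snd_prod]
  rw [wassersteinDist_eq_iInf_eLpNorm' hs]
  exact le_antisymm ((iInf₂_le (μ.prod (Measure.dirac 0)) hprod).trans_eq (hcost hprod))
    (le_iInf₂ fun σ h => (hcost h).ge)

theorem eLpNorm'_sub_le_eLpNorm'_sub_rpow_mul {σ : Measure (E × E)} {μ ν : Measure E}
    {r s : ℝ} (hr : 1 ≤ r) (hrs : r < s) (h₁ : σ.map Prod.fst = μ)
    (h₂ : σ.map Prod.snd = ν) :
    eLpNorm' (fun p : E × E => p.1 - p.2) r σ ≤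
      eLpNorm' (fun p : E × E => p.1 - p.2) 1 σ ^ ((1 / r - 1 / s) / (1 - 1 / s)) *
        (eLpNorm' id s μ + eLpNorm' id s ν) ^ (1 - (1 / r - 1 / s) / (1 - 1 / s)) := by
  have hθ := one_div_sub_one_div_div_mem_Ioc hr hrs
  calc eLpNorm' (fun p : E × E => p.1 - p.2) r σ
      ≤ eLpNorm' (fun p : E × E => p.1 - p.2) 1 σ ^ ((1 / r - 1 / s) / (1 - 1 / s)) *
          eLpNorm' (fun p : E × E => p.1 - p.2) s σ ^ (1 - (1 / r - 1 / s) / (1 - 1 / s)) := by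
        simpa only [div_one] using eLpNorm'_le_eLpNorm'_rpow_mul_eLpNorm'_rpow _ one_pos hr hrs
    _ ≤ _ := by
        have : 0 ≤ 1 - (1 / r - 1 / s) / (1 - 1 / s) := sub_nonneg.2 hθ.2
        gcongr
        exact eLpNorm'_sub_le_eLpNorm'_id_add (hr.trans hrs.le) h₁ h₂

theorem eLpNorm'_id_map_ne_top {Ω : Type*} [MeasurableSpace Ω] {P : Measure Ω} {X : Ω → E}
    {s : ℝ} (hX : Measurable X) (hs : 0 < s)
    (hm : ∫⁻ ω, ENNReal.ofReal (‖X ω‖ ^ s) ∂P ≠ ⊤) :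
    eLpNorm' id s (P.map X) ≠ ⊤ := by
  rw [eLpNorm'_id_map hX, eLpNorm'_eq_lintegral_enorm]
  simp_rw [← ofReal_norm, ENNReal.ofReal_rpow_of_nonneg (norm_nonneg _) hs.le]
  exact ENNReal.rpow_ne_top_of_nonneg (by positivity) hm

end Wasserstein

/-- Wasserstein interpolation: for `1 ≤ r < s` and random elements `X₁, X₂` of a normed
space with finite `s`-th moments, with `θ = (1/r - 1/s)/(1 - 1/s)`,
`W_r(X₁,X₂) ≤ W_1(X₁,X₂)^θ (W_s(X₁,0) + W_s(X₂,0))^{1-θ}`. -/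
theorem stmt12 {E : Type*} [NormedAddCommGroup E] [MeasurableSpace E] [BorelSpace E]
    {Ω : Type*} [MeasurableSpace Ω] (P : Measure Ω) [IsProbabilityMeasure P]
    (X₁ X₂ : Ω → E) (hX₁ : Measurable X₁) (hX₂ : Measurable X₂)
    (r s : ℝ) (hr : 1 ≤ r) (hrs : r < s)
    (hm₁ : ∫⁻ ω, ENNReal.ofReal (‖X₁ ω‖ ^ s) ∂P ≠ ⊤)
    (hm₂ : ∫⁻ ω, ENNReal.ofReal (‖X₂ ω‖ ^ s) ∂P ≠ ⊤) :
    wassersteinDist r (P.map X₁) (P.map X₂) ≤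
      wassersteinDist 1 (P.map X₁) (P.map X₂) ^ ((1 / r - 1 / s) / (1 - 1 / s)) *
        (wassersteinDist s (P.map X₁) (Measure.dirac 0) +
          wassersteinDist s (P.map X₂) (Measure.dirac 0)) ^
          (1 - (1 / r - 1 / s) / (1 - 1 / s)) := by
  have hs : 0 < s := by linarith
  obtain ⟨hθ_pos, hθ_le⟩ := one_div_sub_one_div_div_mem_Ioc hr hrs
  have : IsProbabilityMeasure (P.map X₁) := Measure.isProbabilityMeasure_map hX₁.aemeasurable
  have : IsProbabilityMeasure (P.map X₂) := Measure.isProbabilityMeasure_map hX₂.aemeasurable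
  rw [wassersteinDist_dirac_zero _ hs.le, wassersteinDist_dirac_zero _ hs.le]
  have hmoment_ne_top : eLpNorm' id s (P.map X₁) + eLpNorm' id s (P.map X₂) ≠ ⊤ :=
    ENNReal.add_ne_top.2
      ⟨eLpNorm'_id_map_ne_top hX₁ hs hm₁, eLpNorm'_id_map_ne_top hX₂ hs hm₂⟩
  exact wassersteinDist_le_rpow_mul_of_forall zero_le_one (by linarith) hθ_pos
    (ENNReal.rpow_ne_top_of_nonneg (sub_nonneg.2 hθ_le) hmoment_ne_top)
    (exists_map_fst_eq_map_and_map_snd_eq_map P hX₁ hX₂)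
    fun σ hσ => eLpNorm'_sub_le_eLpNorm'_sub_rpow_mul hr hrs hσ.1 hσ.2
end

section
/- For any $r \in [1,\infty)$ and any two Borel probability measures $\mu,\nu$ on a complete separable metric space with finite $r$-th moments, the Prokhorov distance satisfies $\pi(\mu,\nu) \le W_r(\mu,\nu)^{r/(r+1)}$. -/
/-!
Given a coupling `σ` of `μ` and `ν`, a point of a set `B` sampled from `μ` is moved by `σ` to a
point of the `ε`-thickening of `B`, unless the two coordinates are at distance at least `ε`.
By Markov's inequality this exceptional event has `σ`-mass at most `ε⁻ʳ ∫ dʳ dσ`, which is at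
most `ε` as soon as `ε ^ (r + 1) ≥ ∫ dʳ dσ`. Hence `π(μ, ν) ≤ (∫ dʳ dσ) ^ (1 / (r + 1))` for every
coupling, and taking the infimum over couplings gives `π(μ, ν) ≤ W_r(μ, ν) ^ (r / (r + 1))`.
-/

open MeasureTheory
open scoped ENNReal

open Metric

section Coupling

variable {S : Type*} [MeasurableSpace S] [PseudoMetricSpace S]

lemma measure_le_measure_thickening_add_of_map_eq {μ ν : Measure S} {σ : Measure (S × S)}
    (hσ₁ : σ.map Prod.fst = μ) (hσ₂ : σ.map Prod.snd = ν) {B : Set S} (hB : MeasurableSet B)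
    (e : ℝ) : μ B ≤ ν (thickening e B) + σ {p | e ≤ dist p.1 p.2} := by
  have hcover : Prod.fst ⁻¹' B ⊆ Prod.snd ⁻¹' thickening e B ∪ {p | e ≤ dist p.1 p.2} := by
    intro p hp
    by_cases hd : e ≤ dist p.1 p.2
    · exact Or.inr hd
    · exact Or.inl (mem_thickening_iff.mpr ⟨p.1, hp, by rw [dist_comm]; exact not_le.mp hd⟩)
  calc μ B = σ (Prod.fst ⁻¹' B) := by rw [← hσ₁, Measure.map_apply measurable_fst hB]
    _ ≤ σ (Prod.snd ⁻¹' thickening e B) + σ {p | e ≤ dist p.1 p.2} :=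
        (measure_mono hcover).trans (measure_union_le _ _)
    _ ≤ ν (thickening e B) + σ {p | e ≤ dist p.1 p.2} := by
        gcongr
        rw [← hσ₂]
        exact Measure.le_map_apply measurable_snd.aemeasurable _

variable [OpensMeasurableSpace S] [SecondCountableTopology S]

lemma ofReal_rpow_mul_measure_dist_ge_le_lintegral (σ : Measure (S × S)) {r e : ℝ}
    (hr : 0 ≤ r) (he : 0 ≤ e) :
    ENNReal.ofReal (e ^ r) * σ {p | e ≤ dist p.1 p.2} ≤
      ∫⁻ p, ENNReal.ofReal (dist p.1 p.2 ^ r) ∂σ := by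
  have hmeas : Measurable fun p : S × S => ENNReal.ofReal (dist p.1 p.2 ^ r) :=
    (measurable_dist.pow_const r).ennreal_ofReal
  refine le_trans ?_ (mul_meas_ge_le_lintegral₀ hmeas.aemeasurable (ENNReal.ofReal (e ^ r)))
  gcongr _ * ?_
  exact measure_mono fun p (hp : e ≤ dist p.1 p.2) =>
    ENNReal.ofReal_le_ofReal (Real.rpow_le_rpow he hp hr)

theorem levyProkhorovEDist_le_lintegral_dist_rpow_of_map_eq {μ ν : Measure S}
    [IsProbabilityMeasure μ] [IsProbabilityMeasure ν] {σ : Measure (S × S)}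
    (hσ₁ : σ.map Prod.fst = μ) (hσ₂ : σ.map Prod.snd = ν) {r : ℝ} (hr : 0 ≤ r) :
    levyProkhorovEDist μ ν ≤ (∫⁻ p, ENNReal.ofReal (dist p.1 p.2 ^ r) ∂σ) ^ (1 / (r + 1)) := by
  set I := ∫⁻ p, ENNReal.ofReal (dist p.1 p.2 ^ r) ∂σ
  refine levyProkhorovEDist_le_of_forall_le μ ν _ fun ε B hε hε_top hB => ?_
  refine (measure_le_measure_thickening_add_of_map_eq hσ₁ hσ₂ hB _).trans (add_le_add le_rfl ?_)
  have hε0 : ε ≠ 0 := (zero_le.trans_lt hε).ne'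
  have hI : I < ε ^ r * ε := by
    have := (ENNReal.rpow_inv_lt_iff (by linarith : 0 < r + 1)).mp (by rwa [inv_eq_one_div])
    rwa [ENNReal.rpow_add r 1 hε0 hε_top.ne, ENNReal.rpow_one] at this
  have hmarkov : ε ^ r * σ {p | ε.toReal ≤ dist p.1 p.2} ≤ I := by
    have h := ofReal_rpow_mul_measure_dist_ge_le_lintegral σ hr (ENNReal.toReal_nonneg (a := ε))
    rwa [← ENNReal.ofReal_rpow_of_nonneg ENNReal.toReal_nonneg hr,
      ENNReal.ofReal_toReal hε_top.ne] at h
  exact (ENNReal.mul_le_mul_iff_right (ENNReal.rpow_pos (pos_iff_ne_zero.mpr hε0) hε_top.ne).ne'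
    (ENNReal.rpow_ne_top_of_nonneg hr hε_top.ne)).mp (hmarkov.trans hI.le)

end Coupling

theorem stmt13_general {S : Type*} [MeasurableSpace S] [MetricSpace S] [BorelSpace S]
    [TopologicalSpace.SeparableSpace S]
    (r : ℝ) (hr : 1 ≤ r) (μ ν : Measure S)
    [IsProbabilityMeasure μ] [IsProbabilityMeasure ν] :
    levyProkhorovEDist μ ν ≤ wassersteinDist r μ ν ^ (r / (r + 1)) := by
  have : SecondCountableTopology S := UniformSpace.secondCountable_of_separable S
  have hr0 : 0 < r := by linarith
  have hq : 0 < r / (r + 1) := by positivity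
  have hpow (I : ℝ≥0∞) : (I ^ (1 / r)) ^ (r / (r + 1)) = I ^ (1 / (r + 1)) := by
    rw [← ENNReal.rpow_mul]
    congr 1
    field_simp
  simp only [wassersteinDist, ← ENNReal.orderIsoRpow_apply _ hq, OrderIso.map_iInf]
  simp only [ENNReal.orderIsoRpow_apply, hpow]
  exact le_iInf₂ fun σ hσ => levyProkhorovEDist_le_lintegral_dist_rpow_of_map_eq hσ.1 hσ.2 hr0.le

/-- The Prokhorov distance is bounded by a power of the Wasserstein distance:
`π(μ,ν) ≤ W_r(μ,ν)^{r/(r+1)}` for Borel probability measures with finite `r`-th moments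
on a complete separable metric space. -/
theorem stmt13 {S : Type*} [MeasurableSpace S] [MetricSpace S] [BorelSpace S]
    [CompleteSpace S] [TopologicalSpace.SeparableSpace S]
    (r : ℝ) (hr : 1 ≤ r) (μ ν : Measure S)
    [IsProbabilityMeasure μ] [IsProbabilityMeasure ν]
    (x₀ : S)
    (hμ : ∫⁻ x, ENNReal.ofReal (dist x x₀ ^ r) ∂μ ≠ ⊤)
    (hν : ∫⁻ x, ENNReal.ofReal (dist x x₀ ^ r) ∂ν ≠ ⊤) :
    levyProkhorovEDist μ ν ≤ wassersteinDist r μ ν ^ (r / (r + 1)) :=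
  stmt13_general r hr μ ν
end

section
/- Let $(X_i)_{i\ge 0}$ be a stationary sequence of mean-zero real random variables with $\|\sum_{i=a}^{a+n-1} X_i\|_s \le C n^{1/2}$ for all $n \ge 1$, $a \ge 0$, for some $s > 2$. Then there is a constant $C' > 0$ such that $\|\max_{1\le j\le n} |\sum_{i=0}^{j-1} X_i|\|_s \le C' n^{1/2}$ for all $n \ge 1$. -/
open MeasureTheory
open scoped ENNReal

/-! Dyadic chaining. Let `S_a(j) = X_a + ⋯ + X_{a+j-1}` and `M_a(n) = max_{j ≤ n} |S_a(j)|`.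
A partial sum of length at most `2m` either has length at most `m` or splits at `m`, so
`M_a(2m) ≤ max (M_a(m), |S_a(m)| + M_{a+m}(m))`. Since `‖max f g‖_s^s ≤ ‖f‖_s^s + ‖g‖_s^s`,
Minkowski's inequality gives `‖M_a(2m)‖_s^s ≤ ‖M_a(m)‖_s^s + (‖S_a(m)‖_s + ‖M_{a+m}(m)‖_s)^s`.
Running the induction over all starting points `a` at once yields `‖M_a(2^k)‖_s ≤ K 2^{k/2}`
as soon as `K^s + (C + K)^s ≤ 2^{s/2} K^s`, and such a `K` exists precisely because `s > 2`;
monotonicity of `M_a` in `n` then handles general `n`. -/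

section MaxRpow

variable {α : Type*} [MeasurableSpace α] {μ : Measure α}

theorem eLpNorm_ofReal_rpow {s : ℝ} (hs : 0 < s) (f : α → ℝ) :
    eLpNorm f (ENNReal.ofReal s) μ ^ s = ∫⁻ x, ‖f x‖ₑ ^ s ∂μ := by
  have h := eLpNorm_nnreal_pow_eq_lintegral (μ := μ) (f := f) (p := s.toNNReal) (by simpa using hs)
  rwa [Real.coe_toNNReal _ hs.le] at h

theorem eLpNorm_max_rpow_le {s : ℝ} (hs : 0 < s) (f : α → ℝ) {g : α → ℝ}
    (hg : AEMeasurable g μ) :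
    eLpNorm (fun x => max (f x) (g x)) (ENNReal.ofReal s) μ ^ s ≤
      eLpNorm f (ENNReal.ofReal s) μ ^ s + eLpNorm g (ENNReal.ofReal s) μ ^ s := by
  simp only [eLpNorm_ofReal_rpow hs]
  rw [← lintegral_add_right' _ (hg.enorm.pow_const s)]
  refine lintegral_mono fun x => ?_
  rcases max_cases (f x) (g x) with ⟨h, -⟩ | ⟨h, -⟩ <;> rw [h]
  exacts [le_self_add, le_add_self]

end MaxRpow

theorem exists_rpow_add_rpow_add_le_sqrt_two_mul_rpow {s C : ℝ} (hs : 2 < s) (hC : 0 < C) :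
    ∃ K, C ≤ K ∧ K ^ s + (C + K) ^ s ≤ (√2 * K) ^ s := by
  have hs0 : 0 < s := by linarith
  set ρ := (2 ^ (s / 2) - 1 : ℝ) ^ s⁻¹
  have h2 : (2 : ℝ) < 2 ^ (s / 2) := by
    simpa using Real.rpow_lt_rpow_of_exponent_lt one_lt_two (show (1 : ℝ) < s / 2 by linarith)
  have hρs : ρ ^ s = 2 ^ (s / 2) - 1 := Real.rpow_inv_rpow (by linarith) hs0.ne'
  have hρ1 : 1 < ρ := Real.one_lt_rpow (by linarith) (by positivity)
  have hρ2 : ρ ≤ 2 := by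
    refine (Real.rpow_le_rpow_iff (by linarith) zero_le_two hs0).1 ?_
    have : (2 : ℝ) ^ (s / 2) ≤ 2 ^ s := Real.rpow_le_rpow_of_exponent_le one_le_two (by linarith)
    linarith
  refine ⟨C / (ρ - 1), ?_, le_of_eq ?_⟩
  · rw [le_div_iff₀ (by linarith)]; nlinarith
  · have hK : C + C / (ρ - 1) = ρ * (C / (ρ - 1)) := by
      have : ρ - 1 ≠ 0 := by linarith
      field_simp
      ring
    have hsqrt : √2 ^ s = 2 ^ (s / 2) := by
      rw [Real.sqrt_eq_rpow, ← Real.rpow_mul zero_le_two]; ring_nf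
    rw [hK, Real.mul_rpow (by linarith) (by positivity),
      Real.mul_rpow (by positivity) (by positivity), hρs, hsqrt]
    ring

section PartialSums

variable {Ω : Type*} (X : ℕ → Ω → ℝ)

noncomputable def maxAbsPartialSum (a n : ℕ) (ω : Ω) : ℝ :=
  (Finset.range (n + 1)).sup' Finset.nonempty_range_add_one
    fun j => |∑ i ∈ Finset.Ico a (a + j), X i ω|

variable {X}

theorem abs_sum_Ico_le_maxAbsPartialSum {a n j : ℕ} (hj : j ≤ n) (ω : Ω) :
    |∑ i ∈ Finset.Ico a (a + j), X i ω| ≤ maxAbsPartialSum X a n ω :=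
  Finset.le_sup' (fun j => |∑ i ∈ Finset.Ico a (a + j), X i ω|) (Finset.mem_range_succ_iff.2 hj)

theorem maxAbsPartialSum_nonneg (a n : ℕ) (ω : Ω) : 0 ≤ maxAbsPartialSum X a n ω :=
  (abs_nonneg _).trans (abs_sum_Ico_le_maxAbsPartialSum (Nat.zero_le n) ω)

theorem maxAbsPartialSum_mono (a : ℕ) {n n' : ℕ} (h : n ≤ n') (ω : Ω) :
    maxAbsPartialSum X a n ω ≤ maxAbsPartialSum X a n' ω :=
  Finset.sup'_mono _ (Finset.range_subset_range.2 (by omega)) _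

theorem measurable_maxAbsPartialSum [MeasurableSpace Ω] (hX : ∀ i, Measurable (X i)) (a n : ℕ) :
    Measurable (maxAbsPartialSum X a n) :=
  Finset.measurable_range_sup'' fun _ _ => (Finset.measurable_sum _ fun i _ => hX i).abs

theorem maxAbsPartialSum_two_mul_le (a m : ℕ) (ω : Ω) :
    maxAbsPartialSum X a (2 * m) ω ≤
      max (maxAbsPartialSum X a m ω)
        (|∑ i ∈ Finset.Ico a (a + m), X i ω| + maxAbsPartialSum X (a + m) m ω) := by
  refine Finset.sup'_le _ _ fun j hj => ?_
  rw [Finset.mem_range_succ_iff] at hj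
  rcases le_or_gt j m with hjm | hmj
  · exact le_max_of_le_left (abs_sum_Ico_le_maxAbsPartialSum hjm ω)
  · refine le_max_of_le_right ?_
    have hsplit : ∑ i ∈ Finset.Ico a (a + j), X i ω =
        ∑ i ∈ Finset.Ico a (a + m), X i ω + ∑ i ∈ Finset.Ico (a + m) (a + m + (j - m)), X i ω := by
      rw [show a + m + (j - m) = a + j by omega]
      exact (Finset.sum_Ico_consecutive _ (by omega) (by omega)).symm
    rw [hsplit]
    exact (abs_add_le _ _).trans (add_le_add le_rfl (abs_sum_Ico_le_maxAbsPartialSum (by omega) ω))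

theorem sup'_abs_sum_range_eq_maxAbsPartialSum {n : ℕ} (hn : 1 ≤ n) (ω : Ω) :
    (Finset.Icc 1 n).sup' (Finset.nonempty_Icc.2 hn) (fun j => |∑ i ∈ Finset.range j, X i ω|) =
      maxAbsPartialSum X 0 n ω := by
  refine le_antisymm (Finset.sup'_le _ _ fun j hj => ?_) (Finset.sup'_le _ _ fun j hj => ?_)
  · have := abs_sum_Ico_le_maxAbsPartialSum (X := X) (a := 0) (Finset.mem_Icc.1 hj).2 ω
    rwa [zero_add, ← Finset.range_eq_Ico] at this
  · rcases Nat.eq_zero_or_pos j with rfl | hj0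
    · refine le_trans ?_ (Finset.le_sup' _ (Finset.mem_Icc.2 ⟨le_rfl, hn⟩))
      simp
    · refine le_trans (le_of_eq ?_) (Finset.le_sup' _
        (Finset.mem_Icc.2 ⟨hj0, Finset.mem_range_succ_iff.1 hj⟩))
      simp

variable [MeasurableSpace Ω] {μ : Measure Ω}

theorem eLpNorm_maxAbsPartialSum_two_mul_rpow_le (hX : ∀ i, Measurable (X i)) {s : ℝ}
    (hs : 1 ≤ s) (a m : ℕ) :
    eLpNorm (maxAbsPartialSum X a (2 * m)) (ENNReal.ofReal s) μ ^ s ≤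
      eLpNorm (maxAbsPartialSum X a m) (ENNReal.ofReal s) μ ^ s +
        (eLpNorm (fun ω => ∑ i ∈ Finset.Ico a (a + m), X i ω) (ENNReal.ofReal s) μ +
          eLpNorm (maxAbsPartialSum X (a + m) m) (ENNReal.ofReal s) μ) ^ s := by
  set S := fun ω => ∑ i ∈ Finset.Ico a (a + m), X i ω
  have hS : Measurable S := Finset.measurable_sum _ fun i _ => hX i
  have hM := measurable_maxAbsPartialSum hX (a + m) m
  calc _ ≤ eLpNorm (fun ω => max (maxAbsPartialSum X a m ω)
          (|S ω| + maxAbsPartialSum X (a + m) m ω)) (ENNReal.ofReal s) μ ^ s := by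
        gcongr
        refine eLpNorm_mono_real fun ω => ?_
        rw [Real.norm_of_nonneg (maxAbsPartialSum_nonneg a _ ω)]
        exact maxAbsPartialSum_two_mul_le a m ω
    _ ≤ _ := eLpNorm_max_rpow_le (by linarith) _ (hS.abs.add hM).aemeasurable
    _ ≤ _ := by
        gcongr
        calc _ ≤ eLpNorm (fun ω => |S ω|) (ENNReal.ofReal s) μ +
              eLpNorm (maxAbsPartialSum X (a + m) m) (ENNReal.ofReal s) μ :=
            eLpNorm_add_le hS.abs.aestronglyMeasurable hM.aestronglyMeasurable
              (ENNReal.one_le_ofReal.2 hs)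
          _ = _ := by simp_rw [← Real.norm_eq_abs, eLpNorm_norm]

theorem eLpNorm_maxAbsPartialSum_two_pow_le (hX : ∀ i, Measurable (X i)) {s C K : ℝ}
    (hs : 1 ≤ s) (hC : 0 ≤ C) (hCK : C ≤ K) (hK : K ^ s + (C + K) ^ s ≤ (√2 * K) ^ s)
    (hsum : ∀ a n : ℕ, 1 ≤ n →
      eLpNorm (fun ω => ∑ i ∈ Finset.Ico a (a + n), X i ω) (ENNReal.ofReal s) μ ≤
        ENNReal.ofReal (C * √n))
    (k a : ℕ) :
    eLpNorm (maxAbsPartialSum X a (2 ^ k)) (ENNReal.ofReal s) μ ≤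
      ENNReal.ofReal (K * √(2 ^ k : ℕ)) := by
  have hs0 : 0 < s := by linarith
  have hK0 : 0 ≤ K := hC.trans hCK
  induction k generalizing a with
  | zero =>
    calc _ ≤ eLpNorm (fun ω => ∑ i ∈ Finset.Ico a (a + 1), X i ω) (ENNReal.ofReal s) μ := by
          refine eLpNorm_mono fun ω => ?_
          rw [Real.norm_of_nonneg (maxAbsPartialSum_nonneg a _ ω), Real.norm_eq_abs]
          refine Finset.sup'_le _ _ fun j hj => ?_
          rw [pow_zero, Finset.mem_range] at hj
          interval_cases j <;> simp
      _ ≤ ENNReal.ofReal (C * √(1 : ℕ)) := hsum a 1 le_rfl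
      _ ≤ _ := ENNReal.ofReal_le_ofReal (by simpa using hCK)
  | succ k ih =>
    set m := 2 ^ k with hm
    have hsqrt : √(2 ^ (k + 1) : ℕ) = √2 * √m := by
      rw [← Real.sqrt_mul zero_le_two, hm]; push_cast; ring_nf
    have hreal : (K * √m) ^ s + ((C + K) * √m) ^ s ≤ (K * √(2 ^ (k + 1) : ℕ)) ^ s :=
      calc (K * √m) ^ s + ((C + K) * √m) ^ s = (K ^ s + (C + K) ^ s) * √m ^ s := by
            rw [Real.mul_rpow hK0 (by positivity), Real.mul_rpow (by positivity) (by positivity),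
              add_mul]
        _ ≤ (√2 * K) ^ s * √m ^ s := by gcongr
        _ = _ := by
            rw [← Real.mul_rpow (by positivity) (by positivity), hsqrt]
            ring_nf
    rw [← ENNReal.rpow_le_rpow_iff hs0, pow_succ', ← hm]
    calc _ ≤ _ := eLpNorm_maxAbsPartialSum_two_mul_rpow_le hX hs a m
      _ ≤ ENNReal.ofReal (K * √m) ^ s +
            (ENNReal.ofReal (C * √m) + ENNReal.ofReal (K * √m)) ^ s := by
          gcongr
          exacts [ih a, hsum a m Nat.one_le_two_pow, ih (a + m)]
      _ = ENNReal.ofReal ((K * √m) ^ s + ((C + K) * √m) ^ s) := by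
          rw [← ENNReal.ofReal_add (by positivity) (by positivity), add_mul,
            ENNReal.ofReal_rpow_of_nonneg (by positivity) hs0.le,
            ENNReal.ofReal_rpow_of_nonneg (by positivity) hs0.le,
            ← ENNReal.ofReal_add (by positivity) (by positivity)]
      _ ≤ ENNReal.ofReal ((K * √(2 ^ (k + 1) : ℕ)) ^ s) := ENNReal.ofReal_le_ofReal hreal
      _ = _ := by rw [← ENNReal.ofReal_rpow_of_nonneg (by positivity) hs0.le, pow_succ', ← hm]

theorem eLpNorm_maxAbsPartialSum_le (hX : ∀ i, Measurable (X i)) {s C K : ℝ}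
    (hs : 1 ≤ s) (hC : 0 ≤ C) (hCK : C ≤ K) (hK : K ^ s + (C + K) ^ s ≤ (√2 * K) ^ s)
    (hsum : ∀ a n : ℕ, 1 ≤ n →
      eLpNorm (fun ω => ∑ i ∈ Finset.Ico a (a + n), X i ω) (ENNReal.ofReal s) μ ≤
        ENNReal.ofReal (C * √n))
    (a : ℕ) {n : ℕ} (hn : 1 ≤ n) :
    eLpNorm (maxAbsPartialSum X a n) (ENNReal.ofReal s) μ ≤ ENNReal.ofReal (√2 * K * √n) := by
  set N := 2 ^ (Nat.log 2 n + 1) with hNdef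
  have hnN : n ≤ N := (Nat.lt_pow_succ_log_self one_lt_two n).le
  have hN : N ≤ 2 * n := by
    rw [hNdef, pow_succ']
    exact Nat.mul_le_mul_left 2 (Nat.pow_log_le_self 2 (by omega))
  calc _ ≤ eLpNorm (maxAbsPartialSum X a N) (ENNReal.ofReal s) μ := by
        refine eLpNorm_mono_real fun ω => ?_
        rw [Real.norm_of_nonneg (maxAbsPartialSum_nonneg a _ ω)]
        exact maxAbsPartialSum_mono a hnN ω
    _ ≤ ENNReal.ofReal (K * √N) :=
        eLpNorm_maxAbsPartialSum_two_pow_le hX hs hC hCK hK hsum _ a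
    _ ≤ _ := by
        refine ENNReal.ofReal_le_ofReal ?_
        rw [mul_comm √2, mul_assoc, ← Real.sqrt_mul zero_le_two]
        exact mul_le_mul_of_nonneg_left (Real.sqrt_le_sqrt (by exact_mod_cast hN)) (hC.trans hCK)

end PartialSums

theorem stmt16_general {Ω : Type*} [MeasurableSpace Ω] (P : Measure Ω)
    (X : ℕ → Ω → ℝ) (s : ℝ) (hs : 2 < s)
    (hmeas : ∀ i, Measurable (X i))
    (C : ℝ) (hC : 0 < C)
    (hsum : ∀ (a : ℕ) (n : ℕ), 1 ≤ n →
      eLpNorm (fun ω => ∑ i ∈ Finset.Ico a (a + n), X i ω) (ENNReal.ofReal s) P ≤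
        ENNReal.ofReal (C * Real.sqrt n)) :
    ∃ C' > (0 : ℝ), ∀ n : ℕ, ∀ hn : 1 ≤ n,
      eLpNorm (fun ω => (Finset.Icc 1 n).sup' (Finset.nonempty_Icc.2 hn)
          fun j => |∑ i ∈ Finset.range j, X i ω|) (ENNReal.ofReal s) P ≤
        ENNReal.ofReal (C' * Real.sqrt n) := by
  obtain ⟨K, hCK, hK⟩ := exists_rpow_add_rpow_add_le_sqrt_two_mul_rpow hs hC
  have hK0 : 0 < K := hC.trans_le hCK
  refine ⟨√2 * K, by positivity, fun n hn => ?_⟩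
  simp_rw [sup'_abs_sum_range_eq_maxAbsPartialSum hn]
  exact eLpNorm_maxAbsPartialSum_le hmeas (by linarith) hC.le hCK hK hsum 0 hn

/-- Serfling-type maximal inequality: if `(X_i)` is stationary, mean zero, and
`‖∑_{i=a}^{a+n-1} X_i‖_s ≤ C n^{1/2}` uniformly for some `s > 2`, then
`‖max_{1≤j≤n} |∑_{i=0}^{j-1} X_i|‖_s ≤ C' n^{1/2}`. -/
theorem stmt16 {Ω : Type*} [MeasurableSpace Ω] (P : Measure Ω) [IsProbabilityMeasure P]
    (X : ℕ → Ω → ℝ) (s : ℝ) (hs : 2 < s)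
    (hmeas : ∀ i, Measurable (X i))
    (hstat : ∀ m n : ℕ,
      P.map (fun ω => fun i : Fin n => X (m + i) ω) = P.map (fun ω => fun i : Fin n => X i ω))
    (hmean : ∀ i, ∫ ω, X i ω ∂P = 0)
    (C : ℝ) (hC : 0 < C)
    (hsum : ∀ (a : ℕ) (n : ℕ), 1 ≤ n →
      eLpNorm (fun ω => ∑ i ∈ Finset.Ico a (a + n), X i ω) (ENNReal.ofReal s) P ≤
        ENNReal.ofReal (C * Real.sqrt n)) :
    ∃ C' > (0 : ℝ), ∀ n : ℕ, ∀ hn : 1 ≤ n,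
      eLpNorm (fun ω => (Finset.Icc 1 n).sup' (Finset.nonempty_Icc.2 hn)
          fun j => |∑ i ∈ Finset.range j, X i ω|) (ENNReal.ofReal s) P ≤
        ENNReal.ofReal (C' * Real.sqrt n) :=
  stmt16_general P X s hs hmeas C hC hsum
end
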